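/- Let A, B, C, D ∈ ℤ². There exists g ∈ G with g({A, B}) = {C, D} (image of the set {A,B} equals {C,D}) if and only if both of the following hold: (i) B − A = D − C or B − A = C − D, and (ii) either A is congruent to C modulo 2 and B is congruent to D modulo 2, or A is congruent to D modulo 2 and B is congruent to C modulo 2. -/

import Mathlib

/-- The point reflection `x ↦ 2p - x` of the plane `ℝ²` about an integer point `p`. -/
noncomputable def ptRefl (p : ℤ × ℤ) : Equiv.Perm (ℝ × ℝ) :=
  Equiv.pointReflection ((p.1 : ℝ), (p.2 : ℝ))

/-- The subgroup `G` of the group of bijections of `ℝ²` generated by the point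
reflections about integer points. -/
noncomputable def Ggrp : Subgroup (Equiv.Perm (ℝ × ℝ)) :=
  Subgroup.closure (Set.range ptRefl)

/-- Two integer points are congruent modulo 2 if their difference has both
coordinates even. -/
def congMod2 (P Q : ℤ × ℤ) : Prop := 2 ∣ P.1 - Q.1 ∧ 2 ∣ P.2 - Q.2

/-- The inclusion of `ℤ²` into `ℝ²`. -/
def intPt (P : ℤ × ℤ) : ℝ × ℝ := ((P.1 : ℝ), (P.2 : ℝ))
/-!
The product of two point reflections about integer points `p`, `q` is the translation by
`2(p - q)`, so `G` consists exactly of the translations by vectors of `2ℤ²` and the point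
reflections `x ↦ 2p - x` with `p ∈ ℤ²`. Now `g {A, B} = {C, D}` means that `g` sends `(A, B)` to
`(C, D)` or to `(D, C)`. A translation by `2v` sends `(A, B)` to `(C, D)` iff `B - A = D - C` and
`A ≡ C (mod 2)`; a reflection `x ↦ 2p - x` does so iff `B - A = C - D` and `A + C` is even, which
again says `A ≡ C (mod 2)`. In both cases `B ≡ D (mod 2)` follows.
-/

lemma intPt_injective : Function.Injective intPt := fun P Q h => by
  simp only [intPt, Prod.ext_iff, Int.cast_inj] at h
  exact Prod.ext h.1 h.2

lemma intPt_add (P Q : ℤ × ℤ) : intPt (P + Q) = intPt P + intPt Q := by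
  simp [intPt]

lemma intPt_neg (P : ℤ × ℤ) : intPt (-P) = -intPt P := by
  simp [intPt]

lemma intPt_sub (P Q : ℤ × ℤ) : intPt (P - Q) = intPt P - intPt Q := by
  simp [intPt]

lemma ptRefl_apply (p : ℤ × ℤ) (x : ℝ × ℝ) : ptRefl p x = intPt (2 • p) - x := by
  simp only [ptRefl, Equiv.pointReflection_apply, vsub_eq_sub, vadd_eq_add, intPt, Prod.ext_iff]
  constructor <;> simp <;> ring

lemma addRight_intPt_eq_intPt_iff (v P Q : ℤ × ℤ) :
    Equiv.addRight (intPt v) (intPt P) = intPt Q ↔ P + v = Q := by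
  show intPt P + intPt v = _ ↔ _
  rw [← intPt_add, intPt_injective.eq_iff]

lemma ptRefl_intPt_eq_intPt_iff (p P Q : ℤ × ℤ) : ptRefl p (intPt P) = intPt Q ↔ 2 • p - P = Q := by
  rw [ptRefl_apply, ← intPt_sub, intPt_injective.eq_iff]

lemma ptRefl_inv (p : ℤ × ℤ) : (ptRefl p)⁻¹ = ptRefl p :=
  Equiv.pointReflection_symm _

lemma ptRefl_mul_ptRefl (p q : ℤ × ℤ) :
    ptRefl p * ptRefl q = Equiv.addRight (intPt (2 • (p - q))) := by
  ext1 x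
  simp only [Equiv.Perm.mul_apply, ptRefl_apply, Equiv.coe_addRight, smul_sub, intPt_sub]
  abel

lemma addRight_mul_ptRefl (u p : ℤ × ℤ) :
    Equiv.addRight (intPt (2 • u)) * ptRefl p = ptRefl (p + u) := by
  ext1 x
  simp only [Equiv.Perm.mul_apply, ptRefl_apply, Equiv.coe_addRight, smul_add, intPt_add]
  abel

lemma ptRefl_mul_addRight (p u : ℤ × ℤ) :
    ptRefl p * Equiv.addRight (intPt (2 • u)) = ptRefl (p - u) := by
  ext1 x
  simp only [Equiv.Perm.mul_apply, ptRefl_apply, Equiv.coe_addRight, smul_sub, intPt_sub]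
  abel

lemma mem_Ggrp_iff {g : Equiv.Perm (ℝ × ℝ)} :
    g ∈ Ggrp ↔ ∃ v : ℤ × ℤ, g = Equiv.addRight (intPt (2 • v)) ∨ g = ptRefl v := by
  constructor
  · intro hg
    induction hg using Subgroup.closure_induction with
    | mem _ hx =>
      obtain ⟨p, rfl⟩ := hx
      exact ⟨p, .inr rfl⟩
    | one => exact ⟨0, .inl (by ext <;> simp [intPt])⟩
    | mul _ _ _ _ ihg ihh =>
      obtain ⟨u, rfl | rfl⟩ := ihg <;> obtain ⟨v, rfl | rfl⟩ := ihh
      · exact ⟨v + u, .inl (by rw [smul_add, intPt_add, Equiv.addRight_add])⟩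
      · exact ⟨v + u, .inr (addRight_mul_ptRefl u v)⟩
      · exact ⟨u - v, .inr (ptRefl_mul_addRight u v)⟩
      · exact ⟨u - v, .inl (ptRefl_mul_ptRefl u v)⟩
    | inv _ _ ih =>
      obtain ⟨v, rfl | rfl⟩ := ih
      · exact ⟨-v, .inl (by rw [Equiv.Perm.inv_def, Equiv.addRight_symm, smul_neg, intPt_neg])⟩
      · exact ⟨v, .inr (ptRefl_inv v)⟩
  · rintro ⟨v, rfl | rfl⟩
    · rw [← sub_zero v, ← ptRefl_mul_ptRefl]
      exact mul_mem (Subgroup.subset_closure ⟨v, rfl⟩) (Subgroup.subset_closure ⟨0, rfl⟩)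
    · exact Subgroup.subset_closure ⟨v, rfl⟩

lemma exists_add_two_smul_eq_iff (A B C D : ℤ × ℤ) :
    (∃ v : ℤ × ℤ, A + 2 • v = C ∧ B + 2 • v = D) ↔
      B - A = D - C ∧ congMod2 A C ∧ congMod2 B D := by
  constructor
  · rintro ⟨v, rfl, rfl⟩
    simp only [congMod2, Prod.ext_iff, Prod.fst_add, Prod.snd_add, Prod.fst_sub, Prod.snd_sub,
      two_nsmul]
    omega
  · rintro ⟨hdiff, ⟨⟨a, ha⟩, ⟨b, hb⟩⟩, -⟩
    refine ⟨(-a, -b), ?_, ?_⟩ <;>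
      simp only [Prod.ext_iff, Prod.fst_add, Prod.snd_add, Prod.fst_sub, Prod.snd_sub,
        two_nsmul] at hdiff ⊢ <;> omega

lemma exists_two_smul_sub_eq_iff (A B C D : ℤ × ℤ) :
    (∃ v : ℤ × ℤ, 2 • v - A = C ∧ 2 • v - B = D) ↔
      B - A = C - D ∧ congMod2 A C ∧ congMod2 B D := by
  constructor
  · rintro ⟨v, rfl, rfl⟩
    simp only [congMod2, Prod.ext_iff, Prod.fst_add, Prod.snd_add, Prod.fst_sub, Prod.snd_sub,
      two_nsmul]
    omega
  · rintro ⟨hdiff, ⟨⟨a, ha⟩, ⟨b, hb⟩⟩, -⟩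
    refine ⟨(A.1 - a, A.2 - b), ?_, ?_⟩ <;>
      simp only [Prod.ext_iff, Prod.fst_add, Prod.snd_add, Prod.fst_sub, Prod.snd_sub,
        two_nsmul] at hdiff ⊢ <;> omega

theorem exists_mem_Ggrp_apply_eq_iff (A B C D : ℤ × ℤ) :
    (∃ g ∈ Ggrp, g (intPt A) = intPt C ∧ g (intPt B) = intPt D) ↔
      (B - A = D - C ∨ B - A = C - D) ∧ congMod2 A C ∧ congMod2 B D := by
  have hcases : (∃ g ∈ Ggrp, g (intPt A) = intPt C ∧ g (intPt B) = intPt D) ↔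
      (∃ v : ℤ × ℤ, A + 2 • v = C ∧ B + 2 • v = D) ∨
        ∃ v : ℤ × ℤ, 2 • v - A = C ∧ 2 • v - B = D := by
    constructor
    · rintro ⟨g, hg, hA, hB⟩
      obtain ⟨v, rfl | rfl⟩ := mem_Ggrp_iff.1 hg
      · rw [addRight_intPt_eq_intPt_iff] at hA hB
        exact .inl ⟨v, hA, hB⟩
      · rw [ptRefl_intPt_eq_intPt_iff] at hA hB
        exact .inr ⟨v, hA, hB⟩
    · rintro (⟨v, hA, hB⟩ | ⟨v, hA, hB⟩)
      · exact ⟨_, mem_Ggrp_iff.2 ⟨v, .inl rfl⟩,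
          (addRight_intPt_eq_intPt_iff _ _ _).2 hA, (addRight_intPt_eq_intPt_iff _ _ _).2 hB⟩
      · exact ⟨_, mem_Ggrp_iff.2 ⟨v, .inr rfl⟩,
          (ptRefl_intPt_eq_intPt_iff _ _ _).2 hA, (ptRefl_intPt_eq_intPt_iff _ _ _).2 hB⟩
  rw [hcases, exists_add_two_smul_eq_iff, exists_two_smul_sub_eq_iff, or_and_right]

/-- For `A, B, C, D ∈ ℤ²`, there is `g ∈ G` with `g {A,B} = {C,D}` iff
(i) `B - A = D - C` or `B - A = C - D`, and (ii) `A ≡ C, B ≡ D (mod 2)` or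
`A ≡ D, B ≡ C (mod 2)`. -/
theorem stmt_9 (A B C D : ℤ × ℤ) :
    (∃ g ∈ Ggrp, (⇑g) '' {intPt A, intPt B} = {intPt C, intPt D}) ↔
      ((B - A = D - C ∨ B - A = C - D) ∧
        ((congMod2 A C ∧ congMod2 B D) ∨ (congMod2 A D ∧ congMod2 B C))) := by
  simp only [Set.image_pair, Set.pair_eq_pair_iff, and_or_left, exists_or]
  rw [exists_mem_Ggrp_apply_eq_iff, exists_mem_Ggrp_apply_eq_iff, or_comm (a := B - A = C - D)]
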